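/- Let R = k{τ} with k = F_{q^n}, and let π = τ^n, so A' = F_q[π] is the center of R. For any nonzero u ∈ R, there exists a nonzero central left multiple of u, i.e., a nonzero f ∈ A' with f = wu for some w ∈ R; moreover, there is a unique monic such f of minimal degree in π, and every central left multiple of u is divisible (in A') by this minimal one. -/

import Mathlib

/-!
Left division with remainder by a nonzero `u` works in `k{τ}`: the leading coefficient of
`τ ^ m * u` is a Frobenius twist of that of `u`, hence nonzero. The remainders of the powers
`π ^ i` modulo `u` lie in the finite set of twisted polynomials of degree `< deg u`, so two of
them coincide and `π ^ a - π ^ b` is a nonzero central left multiple of `u`.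

A central element has its coefficients in `F_q` and supported in degrees divisible by `n`, so its
leading term `c τ ^ m` is again central; hence dividing a central `g` by a monic central `f` leaves
a central quotient. If `f` is a monic central left multiple of minimal degree, the remainder of any
central left multiple `g` is a central left multiple of degree `< deg f`, hence `0`. Two minimal
monic ones differ by an element of degree `< deg f`, which gives uniqueness.
-/

/-- The twisted polynomial ring `R = k{τ}` over `k = F_{q^n}`, axiomatized. -/
structure TwistedPolynomialRing (q : ℕ) (k : Type) [Field k] (R : Type) [Ring R] [Module k R] where
  ι : k →+* R
  τ : R
  tau_comm : ∀ a : k, τ * ι a = ι (a ^ q) * τ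
  smul_def : ∀ (a : k) (r : R), a • r = ι a * r
  basis : Module.Basis ℕ k R
  basis_eq : ∀ i : ℕ, basis i = τ ^ i

variable {q : ℕ} {k R : Type} [Field k] [Ring R] [Module k R]

/-- The τ-degree of a twisted polynomial (`0` for the zero polynomial). -/
noncomputable def TwistedPolynomialRing.degτ (T : TwistedPolynomialRing q k R) (f : R) : ℕ :=
  (T.basis.repr f).support.sup id

/-- `f` is a central left multiple of `u`: `f` lies in the center `A' = F_q[π]`
(`π = τ^n`) of `R = k{τ}`, `f ≠ 0`, and `f = w·u` for some `w ∈ R`. -/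
def TwistedPolynomialRing.IsCLM (T : TwistedPolynomialRing q k R) (u f : R) : Prop :=
  f ∈ Subring.center R ∧ f ≠ 0 ∧ ∃ w : R, f = w * u

/-- `f` is monic (leading τ-coefficient `1`). -/
noncomputable def TwistedPolynomialRing.IsMonic (T : TwistedPolynomialRing q k R) (f : R) : Prop :=
  T.basis.repr f (T.degτ f) = 1

theorem Nat.dvd_of_pow_sub_one_dvd_pow_sub_one {q n j : ℕ} (hq : 1 < q)
    (h : q ^ n - 1 ∣ q ^ j - 1) : n ∣ j := by
  have hgcd := Nat.gcd_eq_left h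
  rw [Nat.pow_sub_one_gcd_pow_sub_one] at hgcd
  have hpow : q ^ Nat.gcd n j = q ^ n := by
    have := Nat.one_le_pow (Nat.gcd n j) q (by omega)
    have := Nat.one_le_pow n q (by omega)
    omega
  exact Nat.gcd_eq_left_iff_dvd.mp (Nat.pow_right_injective hq hpow)

namespace FiniteField

variable {K : Type} [Field K] [Fintype K] {q n : ℕ}

theorem ne_zero_of_card_eq_pow (hK : Fintype.card K = q ^ n) : n ≠ 0 := by
  rintro rfl
  exact (Fintype.one_lt_card (α := K)).ne' (by rw [hK, pow_zero])

theorem dvd_of_forall_pow_pow_eq (hK : Fintype.card K = q ^ n) {j : ℕ}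
    (h : ∀ b : K, b ^ q ^ j = b) : n ∣ j := by
  have hq : 1 < q :=
    (one_lt_pow_iff (ne_zero_of_card_eq_pow hK)).mp (hK ▸ Fintype.one_lt_card)
  have hunits : ∀ x : Kˣ, x ^ (q ^ j - 1) = 1 := fun x => by
    refine mul_right_cancel (b := x) ?_
    rw [← pow_succ, Nat.sub_add_cancel (Nat.one_le_pow _ _ (by omega)), one_mul]
    exact Units.ext (by rw [Units.val_pow_eq_pow_val, h])
  exact Nat.dvd_of_pow_sub_one_dvd_pow_sub_one hq (hK ▸ (forall_pow_eq_one_iff K _).mp hunits)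

end FiniteField

namespace TwistedPolynomialRing

theorem q_ne_zero (T : TwistedPolynomialRing q k R) : q ≠ 0 := by
  rintro rfl
  have h := T.tau_comm 0
  rw [map_zero, mul_zero, pow_zero, map_one, one_mul] at h
  exact T.basis.ne_zero 1 (by rw [T.basis_eq, pow_one, ← h])

variable (T : TwistedPolynomialRing q k R)

theorem repr_tau_pow (i : ℕ) : T.basis.repr (T.τ ^ i) = Finsupp.single i 1 := by
  rw [← T.basis_eq, T.basis.repr_self]

theorem sum_repr_smul_tau_pow (f : R) : (T.basis.repr f).sum (fun i c => c • T.τ ^ i) = f := by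
  conv_rhs => rw [← T.basis.linearCombination_repr f]
  rw [Finsupp.linearCombination_apply]
  exact Finsupp.sum_congr fun i _ => by rw [T.basis_eq]

theorem tau_pow_mul_iota (m : ℕ) (a : k) : T.τ ^ m * T.ι a = T.ι (a ^ q ^ m) * T.τ ^ m := by
  induction m generalizing a with
  | zero => simp
  | succ m ih =>
    rw [pow_succ, mul_assoc, T.tau_comm, ← mul_assoc, ih, ← pow_mul, ← pow_succ', mul_assoc,
      ← pow_succ]

theorem smul_tau_pow_mul_smul_tau_pow (a b : k) (i m : ℕ) :
    (a • T.τ ^ i) * (b • T.τ ^ m) = (a * b ^ q ^ i) • T.τ ^ (i + m) := by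
  rw [T.smul_def, T.smul_def, T.smul_def, mul_assoc, ← mul_assoc (T.τ ^ i), T.tau_pow_mul_iota,
    mul_assoc, ← pow_add, ← mul_assoc, ← map_mul]

theorem repr_sum_smul_tau_pow_add {s : Finset ℕ} {a : ℕ → k} (ha : ∀ i ∉ s, a i = 0)
    (m j : ℕ) : T.basis.repr (∑ i ∈ s, a i • T.τ ^ (i + m)) (j + m) = a j := by
  simp only [map_sum, map_smul, repr_tau_pow, Finsupp.coe_finsetSum, Finset.sum_apply,
    Finsupp.smul_apply, Finsupp.single_apply, add_left_inj, smul_eq_mul, mul_ite, mul_one,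
    mul_zero, Finset.sum_ite_eq']
  split_ifs with hj
  · rfl
  · exact (ha j hj).symm

theorem repr_mul_smul_tau_pow (f : R) (c : k) (m j : ℕ) :
    T.basis.repr (f * (c • T.τ ^ m)) (j + m) = T.basis.repr f j * c ^ q ^ j := by
  conv_lhs => rw [← T.sum_repr_smul_tau_pow f]
  rw [Finsupp.sum, Finset.sum_mul]
  simp_rw [smul_tau_pow_mul_smul_tau_pow]
  exact T.repr_sum_smul_tau_pow_add
    (fun i hi => by rw [Finsupp.notMem_support_iff.mp hi, zero_mul]) m j

theorem repr_smul_tau_pow_mul (c : k) (m : ℕ) (f : R) (j : ℕ) :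
    T.basis.repr ((c • T.τ ^ m) * f) (j + m) = c * T.basis.repr f j ^ q ^ m := by
  conv_lhs => rw [← T.sum_repr_smul_tau_pow f]
  rw [Finsupp.sum, Finset.mul_sum]
  simp_rw [smul_tau_pow_mul_smul_tau_pow, add_comm m]
  exact T.repr_sum_smul_tau_pow_add (fun i hi => by
    rw [Finsupp.notMem_support_iff.mp hi, zero_pow (pow_ne_zero _ T.q_ne_zero), mul_zero]) m j

/-- The twisted polynomials whose coefficients vanish from degree `d` on. Unlike `degτ r < d`,
this is meaningful for `d = 0` and for `r = 0`, where `degτ` takes the junk value `0`. -/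
noncomputable def degLT (d : ℕ) : Submodule k R :=
  (Finsupp.supported k k (Set.Iio d)).comap (T.basis.repr : R →ₗ[k] ℕ →₀ k)

variable {T}

theorem mem_degLT {d : ℕ} {r : R} : r ∈ T.degLT d ↔ ∀ j, d ≤ j → T.basis.repr r j = 0 := by
  simp [degLT, Finsupp.mem_supported']

theorem degLT_mono : Monotone T.degLT := fun _ _ hde _ hr =>
  mem_degLT.mpr fun j hj => mem_degLT.mp hr j (hde.trans hj)

variable (T)

theorem mem_degLT_degτ_add_one (f : R) : f ∈ T.degLT (T.degτ f + 1) := by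
  refine mem_degLT.mpr fun j hj => Finsupp.notMem_support_iff.mp fun hmem => ?_
  have : j ≤ T.degτ f := Finset.le_sup (f := id) hmem
  omega

theorem repr_degτ_ne_zero {f : R} (hf : f ≠ 0) : T.basis.repr f (T.degτ f) ≠ 0 := by
  obtain ⟨i, hi, hsup⟩ := Finset.exists_mem_eq_sup (T.basis.repr f).support
    (Finsupp.support_nonempty_iff.mpr (by simpa using hf)) id
  rw [degτ, hsup]
  exact Finsupp.mem_support_iff.mp hi

theorem degτ_lt_of_mem_degLT {d : ℕ} {r : R} (hr : r ∈ T.degLT d) (h0 : r ≠ 0) :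
    T.degτ r < d :=
  not_le.mp fun hd => T.repr_degτ_ne_zero h0 (mem_degLT.mp hr _ hd)

theorem degτ_smul {c : k} (hc : c ≠ 0) (f : R) : T.degτ (c • f) = T.degτ f := by
  rw [degτ, degτ, map_smul, Finsupp.support_smul_eq hc]

theorem sub_mem_degLT_of_isMonic {f g : R} (hf : T.IsMonic f) (hg : T.IsMonic g)
    (hfg : T.degτ f = T.degτ g) : f - g ∈ T.degLT (T.degτ f) := by
  refine mem_degLT.mpr fun j hj => ?_
  rw [map_sub, Finsupp.sub_apply, sub_eq_zero]
  rcases hj.eq_or_lt with rfl | hlt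
  · rw [hf, hfg, hg]
  · rw [mem_degLT.mp (T.mem_degLT_degτ_add_one f) j hlt,
      mem_degLT.mp (T.mem_degLT_degτ_add_one g) j (hfg ▸ hlt)]

instance finite_degLT [Finite k] (d : ℕ) : Finite (T.degLT d) := by
  refine Finite.of_injective (fun r : T.degLT d => fun j : Fin d => T.basis.repr r j) ?_
  intro r s hrs
  refine Subtype.ext (T.basis.repr.injective (Finsupp.ext fun j => ?_))
  by_cases hj : j < d
  · exact congrFun hrs ⟨j, hj⟩
  · rw [mem_degLT.mp r.2 j (not_lt.mp hj), mem_degLT.mp s.2 j (not_lt.mp hj)]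

theorem sub_smul_tau_pow_mul_mem_degLT {r u : R} {m : ℕ} {c : k}
    (hr : r ∈ T.degLT (T.degτ u + m + 1))
    (hc : T.basis.repr r (T.degτ u + m) = c * T.basis.repr u (T.degτ u) ^ q ^ m) :
    r - (c • T.τ ^ m) * u ∈ T.degLT (T.degτ u + m) := by
  refine mem_degLT.mpr fun j hj => ?_
  obtain ⟨i, rfl⟩ : ∃ i, j = i + m := ⟨j - m, by omega⟩
  rw [map_sub, Finsupp.sub_apply, repr_smul_tau_pow_mul, sub_eq_zero]
  rcases (show T.degτ u ≤ i by omega).eq_or_lt with rfl | hlt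
  · exact hc
  · rw [mem_degLT.mp hr _ (by omega), mem_degLT.mp (T.mem_degLT_degτ_add_one u) i hlt,
      zero_pow (pow_ne_zero _ T.q_ne_zero), mul_zero]

theorem exists_mem_sub_mul_mem_degLT (S : AddSubgroup R) {u : R} (hSu : ∀ w ∈ S, w * u ∈ S)
    (hstep : ∀ m, ∀ r ∈ S, r ∈ T.degLT (T.degτ u + m + 1) → ∃ c : k,
      c • T.τ ^ m ∈ S ∧ T.basis.repr r (T.degτ u + m) = c * T.basis.repr u (T.degτ u) ^ q ^ m)
    {r : R} (hr : r ∈ S) : ∃ w ∈ S, r - w * u ∈ T.degLT (T.degτ u) := by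
  suffices h : ∀ m, ∀ r ∈ S, r ∈ T.degLT (T.degτ u + m) → ∃ w ∈ S, r - w * u ∈ T.degLT (T.degτ u)
    from h (T.degτ r + 1) r hr (T.degLT_mono (by omega) (T.mem_degLT_degτ_add_one r))
  intro m
  induction m with
  | zero => exact fun r _ hr => ⟨0, S.zero_mem, by simpa using hr⟩
  | succ m ih =>
    intro r hrS hr
    obtain ⟨c, hcS, hc⟩ := hstep m r hrS hr
    obtain ⟨w, hwS, hw⟩ :=
      ih _ (S.sub_mem hrS (hSu _ hcS)) (T.sub_smul_tau_pow_mul_mem_degLT hr hc)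
    refine ⟨w + c • T.τ ^ m, S.add_mem hwS hcS, ?_⟩
    rwa [add_mul, ← sub_sub, sub_right_comm]

theorem exists_sub_mul_mem_degLT {u : R} (hu : u ≠ 0) (r : R) :
    ∃ w, r - w * u ∈ T.degLT (T.degτ u) := by
  obtain ⟨w, -, hw⟩ := T.exists_mem_sub_mul_mem_degLT ⊤ (fun _ _ => trivial)
    (fun m r _ _ => ⟨_, trivial,
      (div_mul_cancel₀ _ (pow_ne_zero (q ^ m) (T.repr_degτ_ne_zero hu))).symm⟩)
    (AddSubgroup.mem_top r)
  exact ⟨w, hw⟩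

theorem mem_center_of_commute {x : R} (hτ : Commute x T.τ) (hι : ∀ b, Commute x (T.ι b)) :
    x ∈ Subring.center R := by
  refine Subring.mem_center_iff.mpr fun r => ?_
  rw [← T.sum_repr_smul_tau_pow r]
  refine (Commute.sum_right _ _ _ fun i _ => ?_).symm.eq
  dsimp only
  rw [T.smul_def]
  exact (hι _).mul_right (hτ.pow_right i)

theorem iota_mem_center {c : k} (hc : c ^ q = c) : T.ι c ∈ Subring.center R := by
  refine T.mem_center_of_commute ?_ fun b => by
    simp only [Commute, SemiconjBy, ← map_mul, mul_comm]
  rw [Commute, SemiconjBy, ← pow_one T.τ, T.tau_pow_mul_iota, pow_one, pow_one, hc]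

theorem tau_pow_mem_center {n m : ℕ} [Fintype k] (hk : Fintype.card k = q ^ n) (hm : n ∣ m) :
    T.τ ^ m ∈ Subring.center R := by
  refine T.mem_center_of_commute ((Commute.refl T.τ).pow_left m) fun b => ?_
  obtain ⟨s, rfl⟩ := hm
  rw [Commute, SemiconjBy, T.tau_pow_mul_iota, pow_mul, ← hk, FiniteField.pow_card_pow]

theorem smul_tau_pow_mem_center {n m : ℕ} [Fintype k] (hk : Fintype.card k = q ^ n)
    {c : k} (hc : c ^ q = c) (hm : n ∣ m) : c • T.τ ^ m ∈ Subring.center R := by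
  rw [T.smul_def]
  exact Subring.mul_mem _ (T.iota_mem_center hc) (T.tau_pow_mem_center hk hm)

theorem repr_pow_q_of_mem_center {f : R} (hf : f ∈ Subring.center R) (j : ℕ) :
    T.basis.repr f j ^ q = T.basis.repr f j := by
  have h : T.basis.repr (((1 : k) • T.τ ^ 1) * f) (j + 1) =
      T.basis.repr (f * ((1 : k) • T.τ ^ 1)) (j + 1) := by
    rw [Subring.mem_center_iff.mp hf]
  rwa [repr_smul_tau_pow_mul, repr_mul_smul_tau_pow, one_mul, one_pow, mul_one, pow_one] at h

theorem dvd_of_repr_ne_zero_of_mem_center {n : ℕ} [Fintype k] (hk : Fintype.card k = q ^ n)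
    {f : R} (hf : f ∈ Subring.center R) {j : ℕ} (hj : T.basis.repr f j ≠ 0) : n ∣ j := by
  refine FiniteField.dvd_of_forall_pow_pow_eq hk fun b => ?_
  have h : T.basis.repr ((b • T.τ ^ 0) * f) (j + 0) =
      T.basis.repr (f * (b • T.τ ^ 0)) (j + 0) := by
    rw [Subring.mem_center_iff.mp hf]
  rw [repr_smul_tau_pow_mul, repr_mul_smul_tau_pow, pow_zero, pow_one, mul_comm] at h
  exact mul_left_cancel₀ hj h.symm

theorem exists_mem_center_sub_mul_mem_degLT {n : ℕ} [Fintype k] (hk : Fintype.card k = q ^ n)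
    {f g : R} (hf : f ∈ Subring.center R) (hmonic : T.IsMonic f) (hg : g ∈ Subring.center R) :
    ∃ h ∈ Subring.center R, g - h * f ∈ T.degLT (T.degτ f) := by
  have hnf : n ∣ T.degτ f :=
    T.dvd_of_repr_ne_zero_of_mem_center hk hf (by rw [hmonic]; exact one_ne_zero)
  refine T.exists_mem_sub_mul_mem_degLT (Subring.center R).toAddSubgroup
    (fun w hw => Subring.mul_mem _ hw hf) (fun m r hr _ => ?_) hg
  refine ⟨T.basis.repr r (T.degτ f + m), ?_, by rw [hmonic, one_pow, mul_one]⟩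
  by_cases h0 : T.basis.repr r (T.degτ f + m) = 0
  · rw [h0, zero_smul]
    exact zero_mem _
  · exact T.smul_tau_pow_mem_center hk (T.repr_pow_q_of_mem_center hr _)
      ((Nat.dvd_add_right hnf).mp (T.dvd_of_repr_ne_zero_of_mem_center hk hr h0))

theorem exists_isCLM {n : ℕ} [Fintype k] (hk : Fintype.card k = q ^ n) {u : R} (hu : u ≠ 0) :
    ∃ f, T.IsCLM u f := by
  choose w hw using fun i : ℕ => T.exists_sub_mul_mem_degLT hu (T.τ ^ (n * i))
  obtain ⟨a, b, hab, hrem⟩ := Finite.exists_ne_map_eq_of_infinite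
    (fun i : ℕ => (⟨_, hw i⟩ : T.degLT (T.degτ u)))
  have hn : n ≠ 0 := FiniteField.ne_zero_of_card_eq_pow hk
  refine ⟨T.τ ^ (n * a) - T.τ ^ (n * b),
    Subring.sub_mem _ (T.tau_pow_mem_center hk (dvd_mul_right n a))
      (T.tau_pow_mem_center hk (dvd_mul_right n b)), sub_ne_zero.mpr ?_, w a - w b, ?_⟩
  · rw [← T.basis_eq, ← T.basis_eq]
    exact T.basis.injective.ne fun h => hab (Nat.eq_of_mul_eq_mul_left (Nat.pos_of_ne_zero hn) h)
  · rw [sub_mul]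
    exact sub_eq_sub_iff_sub_eq_sub.mp (congrArg Subtype.val hrem)

theorem exists_isMonic_of_isCLM {u g : R} (hg : T.IsCLM u g) :
    ∃ f, T.IsCLM u f ∧ T.IsMonic f ∧ T.degτ f = T.degτ g := by
  obtain ⟨hgc, hg0, w, rfl⟩ := hg
  set c := T.basis.repr (w * u) (T.degτ (w * u))
  have hc : c ≠ 0 := T.repr_degτ_ne_zero hg0
  have hcq : c⁻¹ ^ q = c⁻¹ := by rw [inv_pow, T.repr_pow_q_of_mem_center hgc]
  refine ⟨c⁻¹ • (w * u), ⟨?_, smul_ne_zero (inv_ne_zero hc) hg0, T.ι c⁻¹ * w, ?_⟩, ?_,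
    T.degτ_smul (inv_ne_zero hc) _⟩
  · rw [T.smul_def]
    exact Subring.mul_mem _ (T.iota_mem_center hcq) hgc
  · rw [T.smul_def, mul_assoc]
  · rw [IsMonic, T.degτ_smul (inv_ne_zero hc), map_smul, Finsupp.smul_apply, smul_eq_mul,
      inv_mul_cancel₀ hc]

theorem eq_zero_of_mem_degLT_of_forall_isCLM {u f r : R}
    (hmin : ∀ g, T.IsCLM u g → T.degτ f ≤ T.degτ g) (hr : r ∈ Subring.center R)
    (hru : ∃ w, r = w * u) (hdeg : r ∈ T.degLT (T.degτ f)) : r = 0 := by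
  by_contra h0
  exact (T.degτ_lt_of_mem_degLT hdeg h0).not_ge (hmin r ⟨hr, h0, hru⟩)

variable {T}

theorem IsCLM.exists_mem_center_eq_mul {n : ℕ} [Fintype k] (hk : Fintype.card k = q ^ n)
    {u f g : R} (hf : T.IsCLM u f) (hmonic : T.IsMonic f)
    (hmin : ∀ g, T.IsCLM u g → T.degτ f ≤ T.degτ g) (hg : T.IsCLM u g) :
    ∃ h ∈ Subring.center R, g = h * f := by
  obtain ⟨h, hh, hdeg⟩ := T.exists_mem_center_sub_mul_mem_degLT hk hf.1 hmonic hg.1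
  obtain ⟨wf, hwf⟩ := hf.2.2
  obtain ⟨wg, hwg⟩ := hg.2.2
  refine ⟨h, hh, sub_eq_zero.mp (T.eq_zero_of_mem_degLT_of_forall_isCLM hmin
    (Subring.sub_mem _ hg.1 (Subring.mul_mem _ hh hf.1)) ⟨wg - h * wf, ?_⟩ hdeg)⟩
  rw [hwg, hwf, sub_mul, mul_assoc]

end TwistedPolynomialRing

theorem minimal_central_left_multiple_general
    {n : ℕ} [Fintype k] (hk : Fintype.card k = q ^ n)
    (T : TwistedPolynomialRing q k R)
    (u : R) (hu : u ≠ 0) :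
    (∃ f : R, T.IsCLM u f) ∧
    (∃! f : R, T.IsCLM u f ∧ T.IsMonic f ∧
      (∀ g : R, T.IsCLM u g → T.degτ f ≤ T.degτ g) ∧
      (∀ g : R, T.IsCLM u g → ∃ h ∈ Subring.center R, g = h * f)) := by
  have hex := T.exists_isCLM hk hu
  obtain ⟨g, hg, hgmin⟩ := exists_minimalFor_of_wellFoundedLT (T.IsCLM u) T.degτ hex
  obtain ⟨f, hf, hmonic, hfg⟩ := T.exists_isMonic_of_isCLM hg
  have hmin : ∀ g', T.IsCLM u g' → T.degτ f ≤ T.degτ g' := fun g' hg' =>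
    hfg ▸ (le_total _ _).elim id (hgmin hg')
  refine ⟨hex, f, ⟨hf, hmonic, hmin, fun g hg => hf.exists_mem_center_eq_mul hk hmonic hmin hg⟩,
    fun y ⟨hy, hymonic, hymin, _⟩ => ?_⟩
  have hyf : T.degτ y = T.degτ f := (hymin f hf).antisymm (hmin y hy)
  obtain ⟨wy, hwy⟩ := hy.2.2
  obtain ⟨wf, hwf⟩ := hf.2.2
  refine sub_eq_zero.mp (T.eq_zero_of_mem_degLT_of_forall_isCLM hmin
    (Subring.sub_mem _ hy.1 hf.1) ⟨wy - wf, by rw [hwy, hwf, sub_mul]⟩ ?_)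
  exact hyf ▸ T.sub_mem_degLT_of_isMonic hymonic hmonic hyf

/-- **Existence and uniqueness of the minimal central left multiple.**
Let `R = k{τ}` with `k = F_{q^n}`, `π = τ^n`, so `A' = F_q[π]` is the center of `R`.
For any nonzero `u ∈ R` there exists a nonzero central left multiple of `u`;
moreover there is a unique monic central left multiple `f` of minimal degree,
and every central left multiple of `u` is divisible in `A'` by this minimal one. -/
theorem minimal_central_left_multiple
    {n : ℕ} (hn : 0 < n)
    {F : Type} [Field F] [Fintype F] (hq : Fintype.card F = q)
    [Fintype k] [Algebra F k] (hk : Fintype.card k = q ^ n)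
    (T : TwistedPolynomialRing q k R)
    (u : R) (hu : u ≠ 0) :
    (∃ f : R, T.IsCLM u f) ∧
    (∃! f : R, T.IsCLM u f ∧ T.IsMonic f ∧
      (∀ g : R, T.IsCLM u g → T.degτ f ≤ T.degτ g) ∧
      (∀ g : R, T.IsCLM u g → ∃ h ∈ Subring.center R, g = h * f)) :=
  minimal_central_left_multiple_general hk T u hu
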